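/- arXiv:2406.00892 — 3 statements merged into one kernel-verified Lean document; each statement's English description precedes it below -/
import Mathlib

section
/- Let k be a field and G a finite group. A finite-dimensional kG-module M is faithful (i.e. the algebra map kG → End_k(M) is injective) if and only if the regular module kG is a direct summand of M^{⊕n} for some natural number n. -/
/-!
Since `k` is central in `kG`, an element of `kG` annihilates `M` as soon as it kills a `k`-spanning
family `m₁, …, mₙ`; so `M` is faithful exactly when `a ↦ (a • mⱼ)ⱼ` embeds `kG` into `M^n`.
Such an embedding splits because `kG` is self-injective: a `kG`-linear map `F : N → kG` is
determined by the functional `x ↦ (F x)₁`, and every `k`-linear functional `ℓ` on `N` arises this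
way, from `x ↦ ∑ g, ℓ (g⁻¹ • x) g`. Extending `kG`-linear maps into `kG` thus reduces to extending
`k`-linear functionals, which is possible over a field. Conversely, an embedding of `kG` into
`M^n` shows that the annihilator of `M` annihilates `kG`, hence vanishes.
-/

open MonoidAlgebra

namespace MonoidAlgebra

section Semiring

variable {k G : Type*} [Semiring k]

variable (k) in
noncomputable def lcoeff (g : G) : k[G] →ₗ[k] k :=
  Finsupp.lapply g ∘ₗ (coeffLinearEquiv k).toLinearMap

@[simp]
theorem lcoeff_apply (g : G) (a : k[G]) : lcoeff k g a = a.coeff g := rfl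

variable [Group G]

theorem coeff_one_single_inv_mul (a : k[G]) (g : G) : (single g⁻¹ 1 * a).coeff 1 = a.coeff g := by
  rw [coeff_single_mul_apply, one_mul, inv_inv, mul_one]

theorem linearMap_ext_coeff_one {N : Type*} [AddCommMonoid N] [Module k[G] N]
    {F F' : N →ₗ[k[G]] k[G]} (h : ∀ x, (F x).coeff 1 = (F' x).coeff 1) : F = F' := by
  ext x g
  rw [← coeff_one_single_inv_mul, ← smul_eq_mul, ← map_smul, h, map_smul, smul_eq_mul,
    coeff_one_single_inv_mul]

end Semiring

section LiftFunctional

variable {k G N : Type*} [CommSemiring k] [Group G] [Fintype G]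
  [AddCommMonoid N] [Module k[G] N] [Module k N] [IsScalarTower k k[G] N]

noncomputable def liftFunctional (ℓ : N →ₗ[k] k) : N →ₗ[k[G]] k[G] where
  toFun x := ofCoeff (Finsupp.equivFunOnFinite.symm fun g ↦ ℓ (single g⁻¹ (1 : k) • x))
  map_add' x y := by ext g; simp [smul_add]
  map_smul' c x := by
    ext h
    change ℓ _ = _
    rw [RingHom.id_apply, smul_eq_mul]
    induction c using MonoidAlgebra.induction_on with
    | of g =>
      rw [← mul_smul, of_apply, single_mul_single, one_mul, coeff_single_mul_apply, one_mul]
      change _ = ℓ _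
      rw [mul_inv_rev, inv_inv]
    | add b c hb hc =>
      rw [add_smul, smul_add, map_add, hb, hc, add_mul, coeff_add, Finsupp.add_apply]
    | smul t c hc =>
      rw [smul_assoc, smul_comm, map_smul, hc, smul_mul_assoc, coeff_smul, Finsupp.smul_apply,
        smul_eq_mul]

theorem coeff_one_liftFunctional (ℓ : N →ₗ[k] k) (x : N) :
    (liftFunctional (G := G) ℓ x).coeff 1 = ℓ x := by
  change ℓ _ = _
  rw [inv_one, ← one_def, one_smul]

end LiftFunctional

variable {k G : Type*} [Field k] [Group G] [Fintype G]
  {A B : Type*} [AddCommGroup A] [Module k[G] A] [Module k A] [IsScalarTower k k[G] A]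
  [AddCommGroup B] [Module k[G] B] [Module k B] [IsScalarTower k k[G] B]

theorem exists_comp_eq_of_injective (i : A →ₗ[k[G]] B) (hi : Function.Injective i)
    (f : A →ₗ[k[G]] k[G]) : ∃ g : B →ₗ[k[G]] k[G], g ∘ₗ i = f := by
  obtain ⟨s, hs⟩ := (i.restrictScalars k).exists_leftInverse_of_injective
    (LinearMap.ker_eq_bot.mpr hi)
  refine ⟨liftFunctional (lcoeff k 1 ∘ₗ f.restrictScalars k ∘ₗ s), linearMap_ext_coeff_one ?_⟩
  intro x
  have hsi : s (i x) = x := LinearMap.congr_fun hs x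
  rw [LinearMap.comp_apply, coeff_one_liftFunctional]
  simp [hsi]

end MonoidAlgebra

theorem ker_pi_toSpanSingleton_eq_annihilator {k A M ι : Type*} [Semiring k] [Ring A]
    [AddCommGroup M] [Module A M] [Module k M] [SMulCommClass A k M] {m : ι → M}
    (hm : Submodule.span k (Set.range m) = ⊤) :
    LinearMap.ker (LinearMap.pi fun j ↦ LinearMap.toSpanSingleton A M (m j)) =
      Module.annihilator A M := by
  ext a
  simp only [LinearMap.mem_ker, funext_iff, LinearMap.pi_apply, LinearMap.toSpanSingleton_apply,
    Pi.zero_apply, Module.mem_annihilator]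
  refine ⟨fun ha x ↦ ?_, fun ha j ↦ ha (m j)⟩
  have hx : x ∈ Submodule.span k (Set.range m) := hm ▸ Submodule.mem_top
  induction hx using Submodule.span_induction with
  | mem y hy => obtain ⟨j, rfl⟩ := hy; exact ha j
  | zero => exact smul_zero a
  | add y z _ _ hy hz => rw [smul_add, hy, hz, add_zero]
  | smul t y _ hy => rw [smul_comm, hy, smul_zero]

/-- Let `k` be a field and `G` a finite group. A finite-dimensional `kG`-module `M` is
faithful (its annihilator ideal in the group algebra `kG` is zero) if and only if the
regular module `kG` is a direct summand of `M^{⊕n}` for some natural number `n`. -/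
theorem stmt_2 (k G M : Type) [Field k] [Group G] [Fintype G]
    [AddCommGroup M] [Module (MonoidAlgebra k G) M] [Module k M]
    [IsScalarTower k (MonoidAlgebra k G) M] [SMulCommClass (MonoidAlgebra k G) k M]
    [FiniteDimensional k M] :
    Module.annihilator (MonoidAlgebra k G) M = ⊥ ↔
      ∃ (n : ℕ) (i : MonoidAlgebra k G →ₗ[MonoidAlgebra k G] (Fin n → M))
        (r : (Fin n → M) →ₗ[MonoidAlgebra k G] MonoidAlgebra k G),
        r.comp i = LinearMap.id := by
  constructor
  · intro hM
    obtain ⟨n, m, hm⟩ := Module.Finite.exists_fin (R := k) (M := M)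
    let i := LinearMap.pi fun j ↦ LinearMap.toSpanSingleton (MonoidAlgebra k G) M (m j)
    have hi : Function.Injective i := by
      rw [← LinearMap.ker_eq_bot, ker_pi_toSpanSingleton_eq_annihilator hm, hM]
    obtain ⟨r, hr⟩ := exists_comp_eq_of_injective i hi LinearMap.id
    exact ⟨n, i, r, hr⟩
  · rintro ⟨n, i, r, hri⟩
    refine le_bot_iff.mp <| calc
      Module.annihilator (MonoidAlgebra k G) M
          ≤ Module.annihilator (MonoidAlgebra k G) (Fin n → M) := by
        rw [Module.annihilator_pi]; exact le_iInf fun _ ↦ le_rfl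
      _ ≤ Module.annihilator (MonoidAlgebra k G) (MonoidAlgebra k G) :=
        i.annihilator_le_of_injective (LinearMap.injective_of_comp_eq_id i r hri)
      _ = ⊥ := Module.annihilator_eq_bot.mpr inferInstance
end

section
/- Let k be a field, n ≥ 2, and let I be the two-sided ideal of the group algebra kS_n generated by the element 1 + (1 2) (where (1 2) is the transposition). Then I equals the kernel of the k-algebra homomorphism kS_n → k induced by the sign character of S_n. -/
/-!
Modulo any two-sided ideal `I`, the group elements `g` with `g ≡ χ g` (for a character `χ`)
form a submonoid, and once it is everything, every `x` is congruent to the scalar `χ x`, so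
`ker χ ⊆ I`. For the sign character and `I = (1 + (0 1))`, the conjugates `1 + τ` of the
generator put every transposition `τ` in this submonoid, and transpositions generate `S_n`.
-/

open MonoidAlgebra

namespace MonoidAlgebra

section Character

variable {k G : Type*} [CommRing k] [Monoid G]

def charCongrSubmonoid (χ : G →* k) (I : TwoSidedIdeal (MonoidAlgebra k G)) : Submonoid G where
  carrier := {g | of k G g - algebraMap k _ (χ g) ∈ I}
  one_mem' := by simp
  mul_mem' {g h} hg hh := by
    have key : of k G (g * h) - algebraMap k _ (χ (g * h)) =
        (of k G g - algebraMap k _ (χ g)) * of k G h +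
          algebraMap k _ (χ g) * (of k G h - algebraMap k _ (χ h)) := by
      simp only [map_mul]
      noncomm_ring
    rw [Set.mem_ofPred_eq, key]
    exact I.add_mem (I.mul_mem_right _ _ hg) (I.mul_mem_left _ _ hh)

theorem mem_charCongrSubmonoid {χ : G →* k} {I : TwoSidedIdeal (MonoidAlgebra k G)} {g : G} :
    g ∈ charCongrSubmonoid χ I ↔ of k G g - algebraMap k _ (χ g) ∈ I :=
  Iff.rfl

theorem sub_algebraMap_lift_mem {χ : G →* k} {I : TwoSidedIdeal (MonoidAlgebra k G)}
    (hχ : charCongrSubmonoid χ I = ⊤) (x : MonoidAlgebra k G) :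
    x - algebraMap k _ (lift k k G χ x) ∈ I := by
  induction x using MonoidAlgebra.induction_on with
  | of g =>
    rw [lift_of, ← mem_charCongrSubmonoid, hχ]
    trivial
  | add x y hx hy =>
    rw [map_add, map_add, add_sub_add_comm]
    exact I.add_mem hx hy
  | smul r x hx =>
    rw [map_smul, smul_eq_mul, map_mul, Algebra.smul_def, ← mul_sub]
    exact I.mul_mem_left _ _ hx

theorem ker_lift_le {χ : G →* k} {I : TwoSidedIdeal (MonoidAlgebra k G)}
    (hχ : charCongrSubmonoid χ I = ⊤) : TwoSidedIdeal.ker (lift k k G χ) ≤ I := by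
  intro x hx
  rw [TwoSidedIdeal.mem_ker] at hx
  simpa [hx] using sub_algebraMap_lift_mem hχ x

end Character

theorem one_add_of_mem_of_isConj {k G : Type*} [CommRing k] [Group G]
    {I : TwoSidedIdeal (MonoidAlgebra k G)} {g h : G} (hgh : IsConj g h)
    (hg : 1 + of k G g ∈ I) : 1 + of k G h ∈ I := by
  obtain ⟨c, rfl⟩ := isConj_iff.mp hgh
  have hconj : of k G c * (1 + of k G g) * of k G c⁻¹ = 1 + of k G (c * g * c⁻¹) := by
    rw [mul_add, add_mul, mul_one, ← map_mul, ← map_mul, ← map_mul, mul_inv_cancel, map_one]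
  rw [← hconj]
  exact I.mul_mem_right _ _ (I.mul_mem_left _ _ hg)

end MonoidAlgebra

namespace Equiv.Perm

variable (k : Type*) [CommRing k] {α : Type*} [DecidableEq α] [Fintype α]

def signHom : Perm α →* k :=
  (Int.castRingHom k).toMonoidHom.comp ((Units.coeHom ℤ).comp sign)

variable {k}

theorem signHom_swap {a b : α} (hab : a ≠ b) : signHom k (swap a b) = -1 := by
  simp [signHom, sign_swap hab]

theorem charCongrSubmonoid_signHom_eq_top {I : TwoSidedIdeal (MonoidAlgebra k (Perm α))}
    {a b : α} (hab : a ≠ b) (hI : 1 + of k _ (swap a b) ∈ I) :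
    charCongrSubmonoid (signHom k) I = ⊤ := by
  rw [eq_top_iff, ← mclosure_isSwap, Submonoid.closure_le]
  rintro _ ⟨c, d, hcd, rfl⟩
  rw [SetLike.mem_coe, mem_charCongrSubmonoid, signHom_swap hcd, map_neg, map_one, sub_neg_eq_add,
    add_comm]
  exact one_add_of_mem_of_isConj (isConj_swap hab hcd) hI

end Equiv.Perm

/-- Let `k` be a field, `n ≥ 2`, and let `I` be the two-sided ideal of the group algebra
`kS_n` generated by the element `1 + (1 2)`. Then `I` equals the kernel of the `k`-algebra
homomorphism `kS_n → k` induced by the sign character of `S_n`. -/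
theorem stmt_7 (k : Type) [Field k] (n : ℕ) (hn : 2 ≤ n) :
    TwoSidedIdeal.span
        {1 + MonoidAlgebra.of k (Equiv.Perm (Fin n))
            (Equiv.swap (⟨0, by omega⟩ : Fin n) (⟨1, by omega⟩ : Fin n))} =
      TwoSidedIdeal.ker
        (MonoidAlgebra.lift k k (Equiv.Perm (Fin n))
          ((Int.castRingHom k).toMonoidHom.comp
            ((Units.coeHom ℤ).comp Equiv.Perm.sign))) := by
  have h01 : (⟨0, by omega⟩ : Fin n) ≠ ⟨1, by omega⟩ := by simp
  refine le_antisymm ?_ (ker_lift_le (Equiv.Perm.charCongrSubmonoid_signHom_eq_top h01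
    (TwoSidedIdeal.subset_span rfl)))
  rw [TwoSidedIdeal.span_le, Set.singleton_subset_iff, SetLike.mem_coe, TwoSidedIdeal.mem_ker,
    map_add, map_one, lift_of]
  change 1 + Equiv.Perm.signHom k _ = 0
  rw [Equiv.Perm.signHom_swap h01, add_neg_cancel]
end

section
/- Let k be an algebraically closed field of characteristic 2 and let P be a Sylow 2-subgroup of S_4 (of order 8). Then the induced module Ind_P^{S_4} k is a semisimple kS_4-module of dimension 3, isomorphic to the direct sum of the trivial module and the unique 2-dimensional simple kS_4-module. -/
/-!
`Ind_P^{S_4} k` is the permutation module on the three right cosets `P \ S_4`. Since `3` is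
invertible in `k`, the constant functions and the kernel of the augmentation (sum over the
cosets) are complementary invariant subspaces, of dimensions 1 and 2. A nonzero proper
invariant subspace of the kernel would be a line stable under `S_4`; as `S_4` is generated by
involutions, whose only eigenvalue in characteristic 2 is `1`, that line is fixed pointwise, so
it consists of constant functions, and a nonzero constant has augmentation `3 c ≠ 0`.
-/

noncomputable section

variable (k : Type) [Field k]

/-- The carrier of the induced representation `Ind_H^G M` along `φ : H →* G`:
functions `f : G → M` with `f (φ h * g) = ρ h (f g)`. -/
def IndCarrier {G H : Type} [Group G] [Group H] (φ : H →* G)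
    {M : Type} [AddCommGroup M] [Module k M] (ρ : Representation k H M) :
    Submodule k (G → M) where
  carrier := {f | ∀ (h : H) (g : G), f (φ h * g) = ρ h (f g)}
  add_mem' := by
    intro f g hf hg h x
    simp only [Pi.add_apply, hf h x, hg h x, map_add]
  zero_mem' := by
    intro h x
    simp
  smul_mem' := by
    intro c f hf h x
    simp only [Pi.smul_apply, hf h x, map_smul]

/-- The induced representation `Ind_H^G M`, with `G` acting by right translation. -/
def IndRep {G H : Type} [Group G] [Group H] (φ : H →* G)
    {M : Type} [AddCommGroup M] [Module k M] (ρ : Representation k H M) :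
    Representation k G ↥(IndCarrier k φ ρ) where
  toFun σ :=
    { toFun := fun f => ⟨fun g => (f : G → M) (g * σ), fun h g => by
        show (f : G → M) (φ h * g * σ) = ρ h ((f : G → M) (g * σ))
        rw [mul_assoc]
        exact f.2 h (g * σ)⟩
      map_add' := fun f g => by ext x; rfl
      map_smul' := fun c f => by ext x; rfl }
  map_one' := by
    ext f g
    simp
  map_mul' := fun σ τ => by
    ext f g
    show (f : G → M) (g * (σ * τ)) = (f : G → M) (g * σ * τ)
    rw [mul_assoc]

/-- Transport of permutations along an equivalence, as a monoid homomorphism. -/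
def permMapHom {α β : Type} (e : α ≃ β) : Equiv.Perm α →* Equiv.Perm β where
  toFun σ := (e.symm.trans σ).trans e
  map_one' := by ext x; simp
  map_mul' σ τ := by ext x; simp

/-- The Young subgroup of `S_n` associated with a composition `c` of `n`:
permutations preserving each block. -/
def youngSubgroup {n : ℕ} (c : Composition n) : Subgroup (Equiv.Perm (Fin n)) where
  carrier := {σ | ∀ i : Fin n, c.index (σ i) = c.index i}
  one_mem' := fun i => rfl
  mul_mem' := by
    intro a b ha hb i
    rw [Equiv.Perm.mul_apply, ha, hb]
  inv_mem' := by
    intro a ha i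
    have := ha (a⁻¹ i)
    rw [show a (a⁻¹ i) = i by simp] at this
    exact this.symm

/-- The permutation module `M^c = Ind_{S_c}^{S_n} k` of a composition `c`, realized as
the space of functions on `S_n` invariant under left translation by the Young
subgroup. -/
def permutationModule {n : ℕ} (c : Composition n) : Submodule k (Equiv.Perm (Fin n) → k) :=
  IndCarrier k (youngSubgroup c).subtype (1 : Representation k ↥(youngSubgroup c) k)

/-- the `S_n`-action on the permutation module. -/
def permutationRep {n : ℕ} (c : Composition n) :
    Representation k (Equiv.Perm (Fin n)) ↥(permutationModule k c) :=
  IndRep k (youngSubgroup c).subtype (1 : Representation k ↥(youngSubgroup c) k)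

/-- The module `Ind_H^G k` induced from the trivial representation of a subgroup,
i.e. the permutation module on cosets. -/
def cosetModule {G : Type} [Group G] (H : Subgroup G) : Submodule k (G → k) :=
  IndCarrier k H.subtype (1 : Representation k ↥H k)

/-- The `G`-action on `Ind_H^G k`. -/
def cosetRep {G : Type} [Group G] (H : Subgroup G) :
    Representation k G ↥(cosetModule k H) :=
  IndRep k H.subtype (1 : Representation k ↥H k)

end

open Module QuotientGroup

namespace Representation

variable {k G V : Type*} [Field k] [Group G] [AddCommGroup V] [Module k V]
  (ρ : Representation k G V)

theorem apply_eq_self_of_mul_self_eq_one_of_apply_eq_smul [CharP k 2] {g : G} (hg : g * g = 1)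
    {v : V} (hv : v ≠ 0) {c : k} (hc : ρ g v = c • v) : ρ g v = v := by
  have hcc : (c * c) • v = (1 : k) • v := by
    rw [one_smul, ← smul_smul, ← hc, ← map_smul, ← hc, ← Module.End.mul_apply, ← map_mul, hg,
      map_one, Module.End.one_apply]
  have hc1 : c = 1 := CharTwo.sq_injective (by simpa [sq] using smul_left_injective k hv hcc)
  rw [hc, hc1, one_smul]

theorem apply_eq_self_of_closure_eq_top {S : Set G} (hS : Subgroup.closure S = ⊤) {v : V}
    (hv : ∀ s ∈ S, ρ s v = v) (g : G) : ρ g v = v := by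
  have hg : g ∈ Subgroup.closure S := hS ▸ Subgroup.mem_top g
  induction hg using Subgroup.closure_induction with
  | mem s hs => exact hv s hs
  | one => simp
  | mul x y _ _ hx hy => rw [map_mul, Module.End.mul_apply, hy, hx]
  | inv x _ hx =>
    conv_lhs => rw [← hx]
    exact ρ.inv_self_apply x v

theorem apply_eq_self_of_forall_apply_eq_smul [CharP k 2]
    (hG : Subgroup.closure {g : G | g * g = 1} = ⊤) {v : V} (hv : v ≠ 0)
    (hline : ∀ g, ∃ c : k, ρ g v = c • v) (g : G) : ρ g v = v :=
  ρ.apply_eq_self_of_closure_eq_top hG (fun s hs =>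
    ρ.apply_eq_self_of_mul_self_eq_one_of_apply_eq_smul hs hv (hline s).choose_spec) g

end Representation

section CosetModule

variable {k : Type} [Field k] {G : Type} [Group G] (H : Subgroup G)

@[simp]
theorem cosetRep_apply (g : G) (f : cosetModule k H) (x : G) :
    (cosetRep k H g f : G → k) x = (f : G → k) (x * g) :=
  rfl

theorem cosetModule_apply_mul {f : cosetModule k H} {h : G} (hh : h ∈ H) (x : G) :
    (f : G → k) (h * x) = (f : G → k) x :=
  f.2 ⟨h, hh⟩ x

def cosetModuleEquiv : cosetModule k H ≃ₗ[k] (Quotient (rightRel H) → k) where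
  toFun f q := Quotient.liftOn q (f : G → k) fun a b hab => by
    rw [← cosetModule_apply_mul H (rightRel_apply.mp hab) a, inv_mul_cancel_right]
  map_add' f g := by ext q; induction q using Quotient.ind; rfl
  map_smul' c f := by ext q; induction q using Quotient.ind; rfl
  invFun φ := ⟨fun g => φ ⟦g⟧, fun h g => congrArg φ (Quotient.sound (rightRel_apply.mpr
    (by simp [H.inv_mem h.2])))⟩
  left_inv f := rfl
  right_inv φ := by ext q; induction q using Quotient.ind; rfl

def cosetModuleOne : cosetModule k H :=
  ⟨1, fun _ _ => rfl⟩

@[simp]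
theorem cosetRep_cosetModuleOne (g : G) : cosetRep k H g (cosetModuleOne H) = cosetModuleOne H :=
  rfl

theorem map_cosetRep_span_cosetModuleOne (g : G) :
    (Submodule.span k {cosetModuleOne H}).map (cosetRep k H g) =
      Submodule.span k {cosetModuleOne H} := by
  rw [Submodule.map_span, Set.image_singleton, cosetRep_cosetModuleOne]

theorem cosetRep_apply_of_mem_span_cosetModuleOne (g : G) {f : cosetModule k H}
    (hf : f ∈ Submodule.span k {cosetModuleOne H}) : cosetRep k H g f = f := by
  obtain ⟨c, rfl⟩ := Submodule.mem_span_singleton.mp hf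
  rw [map_smul, cosetRep_cosetModuleOne]

theorem cosetModuleOne_ne_zero : cosetModuleOne (k := k) H ≠ 0 := fun h =>
  one_ne_zero (congrFun (congrArg Subtype.val h) 1)

theorem eq_smul_cosetModuleOne_of_forall_cosetRep_eq {f : cosetModule k H}
    (hf : ∀ g, cosetRep k H g f = f) : f = (f : G → k) 1 • cosetModuleOne H := by
  ext x
  simpa [cosetModuleOne] using congrFun (congrArg Subtype.val (hf x)) 1

variable [Fintype (Quotient (rightRel H))]

instance : FiniteDimensional k (cosetModule k H) :=
  (cosetModuleEquiv H).symm.finiteDimensional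

theorem card_quotient_rightRel_eq_index : Fintype.card (Quotient (rightRel H)) = H.index := by
  rw [← Nat.card_eq_fintype_card, Nat.card_congr (quotientRightRelEquivQuotientLeftRel H),
    Subgroup.index]

theorem finrank_cosetModule : finrank k (cosetModule k H) = H.index := by
  rw [(cosetModuleEquiv H).finrank_eq, finrank_fintype_fun_eq_card, card_quotient_rightRel_eq_index]

def augmentation : cosetModule k H →ₗ[k] k :=
  (∑ q, LinearMap.proj q) ∘ₗ (cosetModuleEquiv H).toLinearMap

theorem augmentation_apply (f : cosetModule k H) :
    augmentation H f = ∑ q, cosetModuleEquiv H f q := by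
  simp [augmentation]

theorem augmentation_cosetRep (g : G) (f : cosetModule k H) :
    augmentation H (cosetRep k H g f) = augmentation H f := by
  let mulRight : Quotient (rightRel H) ≃ Quotient (rightRel H) :=
    Quotient.congr (Equiv.mulRight g) fun a b => by simp [rightRel_apply, mul_assoc]
  rw [augmentation_apply, augmentation_apply, ← mulRight.sum_comp (cosetModuleEquiv H f)]
  refine Finset.sum_congr rfl fun q _ => ?_
  induction q using Quotient.ind
  rfl

theorem map_cosetRep_ker_augmentation_le (g : G) :
    (LinearMap.ker (augmentation H)).map (cosetRep k H g) ≤ LinearMap.ker (augmentation H) := by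
  rintro _ ⟨f, hf, rfl⟩
  exact (augmentation_cosetRep H g f).trans hf

theorem augmentation_cosetModuleOne : augmentation H (cosetModuleOne H) = (H.index : k) := by
  have hone : ∀ q, cosetModuleEquiv H (cosetModuleOne H) q = (1 : k) := by
    intro q
    induction q using Quotient.ind
    rfl
  simp [augmentation_apply, hone, card_quotient_rightRel_eq_index]

theorem augmentation_ne_zero (hH : (H.index : k) ≠ 0) : augmentation (k := k) H ≠ 0 := fun h =>
  hH (by rw [← augmentation_cosetModuleOne, h, LinearMap.zero_apply])

theorem finrank_ker_augmentation_add_one (hH : (H.index : k) ≠ 0) :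
    finrank k (LinearMap.ker (augmentation (k := k) H)) + 1 = H.index := by
  rw [Module.Dual.finrank_ker_add_one_of_ne_zero (augmentation_ne_zero H hH), finrank_cosetModule]

theorem isCompl_span_cosetModuleOne_ker_augmentation (hH : (H.index : k) ≠ 0) :
    IsCompl (Submodule.span k {cosetModuleOne H}) (LinearMap.ker (augmentation H)) := by
  refine (Module.Dual.isCompl_ker_of_disjoint_of_ne_bot (augmentation_ne_zero H hH) ?_
    (by simpa using cosetModuleOne_ne_zero H)).symm
  refine Submodule.disjoint_def.mpr fun x hker hx => ?_
  obtain ⟨c, rfl⟩ := Submodule.mem_span_singleton.mp hx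
  have hc : c * H.index = 0 := by
    simpa [augmentation_cosetModuleOne] using LinearMap.mem_ker.mp hker
  rw [(mul_eq_zero.mp hc).resolve_right hH, zero_smul]

theorem eq_zero_of_mem_ker_augmentation_of_forall_cosetRep_eq (hH : (H.index : k) ≠ 0)
    {f : cosetModule k H} (hf : f ∈ LinearMap.ker (augmentation H))
    (hfix : ∀ g, cosetRep k H g f = f) : f = 0 :=
  Submodule.disjoint_def.mp (isCompl_span_cosetModuleOne_ker_augmentation H hH).disjoint f
    (Submodule.mem_span_singleton.mpr ⟨_, (eq_smul_cosetModuleOne_of_forall_cosetRep_eq H hfix).symm⟩)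
    hf

theorem eq_bot_or_eq_ker_augmentation_of_le [CharP k 2] (hH : H.index = 3)
    (hG : Subgroup.closure {g : G | g * g = 1} = ⊤) {W : Submodule k (cosetModule k H)}
    (hW : W ≤ LinearMap.ker (augmentation H)) (hWinv : ∀ g, W.map (cosetRep k H g) ≤ W) :
    W = ⊥ ∨ W = LinearMap.ker (augmentation H) := by
  have hH' : (H.index : k) ≠ 0 := by rw [hH, Ne, CharP.cast_eq_zero_iff k 2]; norm_num
  rcases eq_or_ne W ⊥ with hbot | hbot
  · exact .inl hbot
  refine .inr (Submodule.eq_of_le_of_finrank_eq hW ?_)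
  by_contra hne
  have hW1 : finrank k W = 1 := by
    have := Submodule.finrank_mono hW
    have := Submodule.one_le_finrank_iff.mpr hbot
    have := finrank_ker_augmentation_add_one H hH'
    omega
  obtain ⟨f, hfW, hf0⟩ := W.exists_mem_ne_zero_of_ne_bot hbot
  have hline (g : G) : ∃ c : k, cosetRep k H g f = c • f := by
    obtain ⟨c, hc⟩ := (finrank_eq_one_iff_of_nonzero' (⟨f, hfW⟩ : W) (by simpa using hf0)).mp hW1
      ⟨_, hWinv g ⟨f, hfW, rfl⟩⟩
    exact ⟨c, (congrArg Subtype.val hc).symm⟩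
  exact hf0 (eq_zero_of_mem_ker_augmentation_of_forall_cosetRep_eq H hH' (hW hfW)
    ((cosetRep k H).apply_eq_self_of_forall_apply_eq_smul hG hf0 hline))

end CosetModule

theorem Equiv.Perm.closure_mul_self_eq_one_eq_top {α : Type*} [Finite α] :
    Subgroup.closure {σ : Equiv.Perm α | σ * σ = 1} = ⊤ := by
  classical
  exact top_le_iff.mp (Equiv.Perm.closure_isSwap (α := α) ▸
    Subgroup.closure_mono fun _ ⟨_, _, _, hσ⟩ => hσ ▸ Equiv.swap_mul_self _ _)

theorem Sylow.index_two_perm_fin_four (P : Sylow 2 (Equiv.Perm (Fin 4))) :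
    (P : Subgroup (Equiv.Perm (Fin 4))).index = 3 := by
  have hG : Nat.card (Equiv.Perm (Fin 4)) = 2 ^ 3 * 3 := by
    simp [Nat.card_eq_fintype_card, Fintype.card_perm, Nat.factorial]
  have hP : Nat.card P = 2 ^ 3 := by
    rw [P.card_eq_multiplicity, hG, Nat.factorization_mul_apply_of_coprime (by norm_num)]
    simp only [Nat.prime_two.factorization_pow, Finsupp.single_eq_same,
      Nat.factorization_eq_zero_of_not_dvd (by norm_num : ¬2 ∣ 3), add_zero]
  have := (P : Subgroup (Equiv.Perm (Fin 4))).card_mul_index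
  rw [hP, hG] at this
  omega

theorem stmt_14_general (k : Type) [Field k] [CharP k 2]
    (P : Sylow 2 (Equiv.Perm (Fin 4))) :
    Module.finrank k ↥(cosetModule k (P : Subgroup (Equiv.Perm (Fin 4)))) = 3 ∧
    ∃ U₁ U₂ : Submodule k ↥(cosetModule k (P : Subgroup (Equiv.Perm (Fin 4)))),
      IsCompl U₁ U₂ ∧
      (∀ g, U₁.map (cosetRep k (P : Subgroup (Equiv.Perm (Fin 4))) g) ≤ U₁) ∧
      (∀ g, U₂.map (cosetRep k (P : Subgroup (Equiv.Perm (Fin 4))) g) ≤ U₂) ∧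
      Module.finrank k ↥U₁ = 1 ∧
      (∀ g, ∀ x ∈ U₁, cosetRep k (P : Subgroup (Equiv.Perm (Fin 4))) g x = x) ∧
      Module.finrank k ↥U₂ = 2 ∧ U₂ ≠ ⊥ ∧
      (∀ W : Submodule k ↥(cosetModule k (P : Subgroup (Equiv.Perm (Fin 4)))),
        W ≤ U₂ → (∀ g, W.map (cosetRep k (P : Subgroup (Equiv.Perm (Fin 4))) g) ≤ W) →
        W = ⊥ ∨ W = U₂) := by
  classical
  set H := (P : Subgroup (Equiv.Perm (Fin 4)))
  have hH : H.index = 3 := P.index_two_perm_fin_four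
  have hH' : (H.index : k) ≠ 0 := by rw [hH, Ne, CharP.cast_eq_zero_iff k 2]; norm_num
  have hker : finrank k (LinearMap.ker (augmentation (k := k) H)) = 2 := by
    have := finrank_ker_augmentation_add_one H hH'
    omega
  refine ⟨hH ▸ finrank_cosetModule H, Submodule.span k {cosetModuleOne H},
    LinearMap.ker (augmentation H), isCompl_span_cosetModuleOne_ker_augmentation H hH',
    fun g => (map_cosetRep_span_cosetModuleOne H g).le, map_cosetRep_ker_augmentation_le H,
    finrank_span_singleton (cosetModuleOne_ne_zero H),
    fun g _ => cosetRep_apply_of_mem_span_cosetModuleOne H g, hker,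
    Submodule.one_le_finrank_iff.mp (by omega),
    fun W => eq_bot_or_eq_ker_augmentation_of_le H hH Equiv.Perm.closure_mul_self_eq_one_eq_top⟩

/-- Let `k` be an algebraically closed field of characteristic 2 and let `P` be a
Sylow 2-subgroup of `S_4` (of order 8). Then the induced module `Ind_P^{S_4} k` is a
semisimple `kS_4`-module of dimension 3, isomorphic to the direct sum of the trivial
module and the unique 2-dimensional simple `kS_4`-module: it decomposes as
`U₁ ⊕ U₂` with `U₁` a 1-dimensional subrepresentation with trivial action and `U₂`
a 2-dimensional simple subrepresentation. -/
theorem stmt_14 (k : Type) [Field k] [IsAlgClosed k] [CharP k 2]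
    (P : Sylow 2 (Equiv.Perm (Fin 4))) :
    Module.finrank k ↥(cosetModule k (P : Subgroup (Equiv.Perm (Fin 4)))) = 3 ∧
    ∃ U₁ U₂ : Submodule k ↥(cosetModule k (P : Subgroup (Equiv.Perm (Fin 4)))),
      IsCompl U₁ U₂ ∧
      (∀ g, U₁.map (cosetRep k (P : Subgroup (Equiv.Perm (Fin 4))) g) ≤ U₁) ∧
      (∀ g, U₂.map (cosetRep k (P : Subgroup (Equiv.Perm (Fin 4))) g) ≤ U₂) ∧
      Module.finrank k ↥U₁ = 1 ∧
      (∀ g, ∀ x ∈ U₁, cosetRep k (P : Subgroup (Equiv.Perm (Fin 4))) g x = x) ∧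
      Module.finrank k ↥U₂ = 2 ∧ U₂ ≠ ⊥ ∧
      (∀ W : Submodule k ↥(cosetModule k (P : Subgroup (Equiv.Perm (Fin 4)))),
        W ≤ U₂ → (∀ g, W.map (cosetRep k (P : Subgroup (Equiv.Perm (Fin 4))) g) ≤ W) →
        W = ⊥ ∨ W = U₂) :=
  stmt_14_general k P
end
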